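/- Let A be a normal n×n complex matrix with Cartesian decomposition A = Re(A) + i·Im(A), where Re(A) = (A + A*)/2 and Im(A) = (A − A*)/(2i). Then for every j: (1/√2)·s_j(Re(A) + Im(A)) ≤ s_j(A) ≤ s_j(|Re(A)| + |Im(A)|). -/

import Mathlib

open Matrix
open scoped ComplexOrder

/-- The `j`-th largest singular value of a square complex matrix (`j : Fin m`, zero-indexed,
so `sv A 0` is the largest singular value). It is defined as the square root of the `j`-th
largest eigenvalue of `Aᴴ * A`. -/
noncomputable def sv {m : ℕ} (A : Matrix (Fin m) (Fin m) ℂ) (j : Fin m) : ℝ :=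
  Real.sqrt ((Matrix.isHermitian_conjTranspose_mul_self A).eigenvalues
    (Tuple.sort ((Matrix.isHermitian_conjTranspose_mul_self A).eigenvalues) j.rev))

/-- The positive semidefinite square root of a positive semidefinite matrix
(the former `Matrix.PosSemidef.sqrt`). -/
noncomputable def psdSqrt {m : ℕ} {P : Matrix (Fin m) (Fin m) ℂ} (hP : P.PosSemidef) :
    Matrix (Fin m) (Fin m) ℂ :=
  (hP.1.eigenvectorUnitary : Matrix (Fin m) (Fin m) ℂ) *
    Matrix.diagonal ((↑) ∘ (√·) ∘ hP.1.eigenvalues) *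
    (star hP.1.eigenvectorUnitary : Matrix (Fin m) (Fin m) ℂ)

theorem psdSqrt_isHermitian {m : ℕ} {P : Matrix (Fin m) (Fin m) ℂ} (hP : P.PosSemidef) :
    (psdSqrt hP).IsHermitian := by
  unfold psdSqrt
  rw [Matrix.IsHermitian, Matrix.conjTranspose_mul, Matrix.conjTranspose_mul,
    Matrix.diagonal_conjTranspose, Matrix.mul_assoc]
  congr 2
  · ext i
    simp
  · simp

/-- The absolute value `|A| = (Aᴴ A)^{1/2}` of a square complex matrix. -/
noncomputable def matAbs {m : ℕ} (A : Matrix (Fin m) (Fin m) ℂ) : Matrix (Fin m) (Fin m) ℂ :=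
  psdSqrt (Matrix.posSemidef_conjTranspose_mul_self A)

/-- The `2n × 2n` block matrix `[[A, B], [C, D]]`, reindexed by `Fin (n + n)`. -/
noncomputable def blk {n : ℕ} (A B C D : Matrix (Fin n) (Fin n) ℂ) :
    Matrix (Fin (n + n)) (Fin (n + n)) ℂ :=
  Matrix.reindex finSumFinEquiv finSumFinEquiv (Matrix.fromBlocks A B C D)

/-- `f(P)` for a Hermitian matrix `P`, via the spectral functional calculus. -/
noncomputable def herCfc {m : ℕ} {P : Matrix (Fin m) (Fin m) ℂ} (hP : P.IsHermitian)
    (f : ℝ → ℝ) : Matrix (Fin m) (Fin m) ℂ :=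
  hP.cfc f

/-- `|A| ^ r` (real power of the absolute value), via the functional calculus. -/
noncomputable def matAbsPow {m : ℕ} (A : Matrix (Fin m) (Fin m) ℂ) (r : ℝ) :
    Matrix (Fin m) (Fin m) ℂ :=
  herCfc (psdSqrt_isHermitian (Matrix.posSemidef_conjTranspose_mul_self A)) (fun t => t ^ r)

/-- `f(|A|)`, via the functional calculus. -/
noncomputable def matAbsCfc {m : ℕ} (A : Matrix (Fin m) (Fin m) ℂ) (f : ℝ → ℝ) :
    Matrix (Fin m) (Fin m) ℂ :=
  herCfc (psdSqrt_isHermitian (Matrix.posSemidef_conjTranspose_mul_self A)) f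

/-- The operator norm: the largest singular value. -/
noncomputable def opNorm {m : ℕ} (A : Matrix (Fin m) (Fin m) ℂ) : ℝ :=
  ⨆ j, sv A j

/-!
Write `H = Re A` and `K = Im A`. Normality makes `H` and `K` commute, hence `AᴴA = H² + K²`.
Both bounds are Loewner inequalities between squares, turned into inequalities between singular
values by Weyl's monotonicity principle (a dimension count between eigenvector spans):
`(H + K)² + (H - K)² = 2 (H² + K²)` gives `(H + K)² ≤ 2 AᴴA`, and
`(|H| + |K|)² = H² + K² + |H||K| + |K||H|`, where `|H||K| ≥ 0` because `|H|` and `|K|` are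
commuting positive matrices, gives `AᴴA ≤ (|H| + |K|)²`.
-/

open Module
open scoped InnerProductSpace MatrixOrder

namespace OrthonormalBasis

variable {𝕜 E ι : Type*} [RCLike 𝕜] [NormedAddCommGroup E] [InnerProductSpace 𝕜 E] [Fintype ι]

lemma repr_eq_zero_of_mem_span_image (b : OrthonormalBasis ι 𝕜 E) {s : Set ι} {x : E}
    (hx : x ∈ Submodule.span 𝕜 (b '' s)) {i : ι} (hi : i ∉ s) : b.repr x i = 0 := by
  rw [← b.coe_toBasis, b.toBasis.mem_span_image] at hx
  rw [← b.coe_toBasis_repr_apply]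
  exact Finsupp.notMem_support_iff.mp fun h => hi (hx h)

lemma norm_sq_eq_sum_norm_repr_sq (b : OrthonormalBasis ι 𝕜 E) (x : E) :
    ‖x‖ ^ 2 = ∑ i, ‖b.repr x i‖ ^ 2 := by
  rw [← b.repr.norm_map, EuclideanSpace.norm_sq_eq]

lemma sum_mul_norm_repr_sq_le_of_mem_span_image (b : OrthonormalBasis ι 𝕜 E) {s : Set ι}
    {f g : ι → ℝ} (hfg : ∀ i ∈ s, f i ≤ g i) {x : E} (hx : x ∈ Submodule.span 𝕜 (b '' s)) :
    ∑ i, f i * ‖b.repr x i‖ ^ 2 ≤ ∑ i, g i * ‖b.repr x i‖ ^ 2 := by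
  refine Finset.sum_le_sum fun i _ => ?_
  by_cases hi : i ∈ s
  · exact mul_le_mul_of_nonneg_right (hfg i hi) (sq_nonneg _)
  · simp [b.repr_eq_zero_of_mem_span_image hx hi]

lemma finrank_span_image (b : OrthonormalBasis ι 𝕜 E) (s : Finset ι) :
    finrank 𝕜 (Submodule.span 𝕜 (b '' s)) = s.card := by
  rw [Set.image_eq_range, finrank_span_eq_card]
  · simp
  · exact b.orthonormal.linearIndependent.comp _ Subtype.val_injective

end OrthonormalBasis

namespace LinearMap.IsSymmetric

variable {𝕜 E : Type*} [RCLike 𝕜] [NormedAddCommGroup E] [InnerProductSpace 𝕜 E]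
  [FiniteDimensional 𝕜 E] {T S : E →ₗ[𝕜] E} {n : ℕ} (hn : finrank 𝕜 E = n)

lemma re_inner_map_self_eq_sum (hT : T.IsSymmetric) (x : E) :
    RCLike.re ⟪T x, x⟫_𝕜 =
      ∑ i, hT.eigenvalues hn i * ‖(hT.eigenvectorBasis hn).repr x i‖ ^ 2 := by
  rw [← (hT.eigenvectorBasis hn).repr.inner_map_map, PiLp.inner_apply, map_sum]
  refine Finset.sum_congr rfl fun i _ => ?_
  rw [eigenvectorBasis_apply_self_apply, RCLike.inner_apply, map_mul (starRingEnd 𝕜),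
    RCLike.conj_ofReal, mul_left_comm, RCLike.mul_conj, ← RCLike.ofReal_pow,
    ← RCLike.ofReal_mul, RCLike.ofReal_re]

/-- Weyl's monotonicity principle, with the eigenvalues in decreasing order. -/
theorem eigenvalues_le_mul_eigenvalues (hT : T.IsSymmetric) (hS : S.IsSymmetric) {c : ℝ}
    (hc : 0 ≤ c) (hTS : ((c : 𝕜) • S - T).IsPositive) (k : Fin n) :
    hT.eigenvalues hn k ≤ c * hS.eigenvalues hn k := by
  set bT := hT.eigenvectorBasis hn
  set bS := hS.eigenvectorBasis hn
  -- spans of dimensions `k + 1` and `n - k` in an `n`-dimensional space meet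
  obtain ⟨x, hxT, hxS, hx0⟩ : ∃ x ∈ Submodule.span 𝕜 (bT '' ↑(Finset.Iic k)),
      x ∈ Submodule.span 𝕜 (bS '' ↑(Finset.Ici k)) ∧ x ≠ 0 := by
    have hmeet : ¬ Disjoint (Submodule.span 𝕜 (bT '' ↑(Finset.Iic k)))
        (Submodule.span 𝕜 (bS '' ↑(Finset.Ici k))) := fun h => by
      have := Submodule.finrank_add_finrank_le_of_disjoint h
      rw [bT.finrank_span_image, bS.finrank_span_image, Fin.card_Iic, Fin.card_Ici, hn] at this
      omega
    simpa [Submodule.disjoint_def] using hmeet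
  have hlow : hT.eigenvalues hn k * ‖x‖ ^ 2 ≤ RCLike.re ⟪T x, x⟫_𝕜 := by
    rw [bT.norm_sq_eq_sum_norm_repr_sq, Finset.mul_sum, re_inner_map_self_eq_sum hn hT]
    exact bT.sum_mul_norm_repr_sq_le_of_mem_span_image
      (fun i hi => hT.eigenvalues_antitone hn (by simpa using hi)) hxT
  have hup : RCLike.re ⟪S x, x⟫_𝕜 ≤ hS.eigenvalues hn k * ‖x‖ ^ 2 := by
    rw [bS.norm_sq_eq_sum_norm_repr_sq, Finset.mul_sum, re_inner_map_self_eq_sum hn hS]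
    exact bS.sum_mul_norm_repr_sq_le_of_mem_span_image
      (fun i hi => hS.eigenvalues_antitone hn (by simpa using hi)) hxS
  have hmid : RCLike.re ⟪T x, x⟫_𝕜 ≤ c * RCLike.re ⟪S x, x⟫_𝕜 := by
    simpa [inner_sub_left, inner_smul_left] using hTS.re_inner_nonneg_left x
  refine le_of_mul_le_mul_right ?_ (by positivity : 0 < ‖x‖ ^ 2)
  calc hT.eigenvalues hn k * ‖x‖ ^ 2 ≤ c * RCLike.re ⟪S x, x⟫_𝕜 := hlow.trans hmid
    _ ≤ c * hS.eigenvalues hn k * ‖x‖ ^ 2 := by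
      rw [mul_assoc]
      exact mul_le_mul_of_nonneg_left hup hc

end LinearMap.IsSymmetric

namespace Matrix.IsHermitian

variable {𝕜 : Type*} [RCLike 𝕜]

theorem eigenvalues₀_le_mul_eigenvalues₀ {n : Type*} [Fintype n] [DecidableEq n]
    {P Q : Matrix n n 𝕜} (hP : P.IsHermitian) (hQ : Q.IsHermitian) {c : ℝ} (hc : 0 ≤ c)
    (hPQ : ((c : 𝕜) • Q - P).PosSemidef) (k : Fin (Fintype.card n)) :
    hP.eigenvalues₀ k ≤ c * hQ.eigenvalues₀ k := by
  refine LinearMap.IsSymmetric.eigenvalues_le_mul_eigenvalues _ _ _ hc ?_ k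
  rwa [← map_smul, ← map_sub, Matrix.isPositive_toEuclideanLin_iff]

lemma eigenvalues_sort {m : ℕ} {P : Matrix (Fin m) (Fin m) 𝕜} (hP : P.IsHermitian) (k : Fin m) :
    hP.eigenvalues (Tuple.sort hP.eigenvalues k) =
      hP.eigenvalues₀ (Fin.cast (Fintype.card_fin m).symm k.rev) := by
  set e := Fintype.equivOfCardEq (α := Fin (Fintype.card (Fin m))) (Fintype.card_fin _)
  let τ : Equiv.Perm (Fin m) := (Fin.revPerm.trans (finCongr (Fintype.card_fin m).symm)).trans e
  have hτ : hP.eigenvalues ∘ τ =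
      hP.eigenvalues₀ ∘ Fin.cast (Fintype.card_fin m).symm ∘ Fin.rev := by
    ext i
    simp [τ, e, eigenvalues]
  have hmono : Monotone (hP.eigenvalues ∘ τ) := by
    rw [hτ]
    exact (eigenvalues₀_antitone hP).comp
      ((Fin.cast_strictMono _).monotone.comp_antitone Fin.rev_anti)
  exact (congrFun (Tuple.unique_monotone (Tuple.monotone_sort _) hmono) k).trans (congrFun hτ k)

end Matrix.IsHermitian

lemma sv_eq_sqrt_eigenvalues₀ {m : ℕ} (A : Matrix (Fin m) (Fin m) ℂ) (j : Fin m) :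
    sv A j = √((isHermitian_conjTranspose_mul_self A).eigenvalues₀
      (Fin.cast (Fintype.card_fin m).symm j)) := by
  rw [sv, Matrix.IsHermitian.eigenvalues_sort, Fin.rev_rev]

lemma sv_le_sqrt_mul_sv {m : ℕ} {A B : Matrix (Fin m) (Fin m) ℂ} {c : ℝ} (hc : 0 ≤ c)
    (hAB : ((c : ℂ) • (Bᴴ * B) - Aᴴ * A).PosSemidef) (j : Fin m) :
    sv A j ≤ √c * sv B j := by
  rw [sv_eq_sqrt_eigenvalues₀, sv_eq_sqrt_eigenvalues₀, ← Real.sqrt_mul hc]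
  exact Real.sqrt_le_sqrt (Matrix.IsHermitian.eigenvalues₀_le_mul_eigenvalues₀ _ _ hc hAB _)

lemma psdSqrt_eq_sqrt {m : ℕ} {P : Matrix (Fin m) (Fin m) ℂ} (hP : P.PosSemidef) :
    psdSqrt hP = CFC.sqrt P := by
  rw [CFC.sqrt_eq_real_sqrt P (nonneg_iff_posSemidef.mpr hP), cfcₙ_eq_cfc, hP.1.cfc_eq]
  rfl

lemma matAbs_eq_abs {m : ℕ} (A : Matrix (Fin m) (Fin m) ℂ) : matAbs A = CFC.abs A :=
  psdSqrt_eq_sqrt _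

section Cartesian

variable {𝕜 n : Type*} [RCLike 𝕜]

lemma posSemidef_two_smul_add_sub_sq [Fintype n] {H K : Matrix n n 𝕜} (hH : H.IsHermitian)
    (hK : K.IsHermitian) : ((2 : 𝕜) • (H * H + K * K) - (H + K)ᴴ * (H + K)).PosSemidef := by
  have h : (2 : 𝕜) • (H * H + K * K) - (H + K)ᴴ * (H + K) = (H - K)ᴴ * (H - K) := by
    rw [conjTranspose_add, conjTranspose_sub, hH.eq, hK.eq, two_smul]
    noncomm_ring
  rw [h]
  exact posSemidef_conjTranspose_mul_self _

lemma posSemidef_matAbs_add_sq_sub {m : ℕ} {H K : Matrix (Fin m) (Fin m) ℂ}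
    (hH : H.IsHermitian) (hK : K.IsHermitian) (hHK : Commute H K) :
    ((matAbs H + matAbs K)ᴴ * (matAbs H + matAbs K) - (H * H + K * K)).PosSemidef := by
  rw [matAbs_eq_abs, matAbs_eq_abs]
  have habs : Commute (CFC.abs H) (CFC.abs K) :=
    hHK.cfcAbs_cfcAbs (by rwa [star_eq_conjTranspose, hK.eq])
  have hsq (X : Matrix (Fin m) (Fin m) ℂ) (hX : X.IsHermitian) :
      CFC.abs X * CFC.abs X = X * X := by
    rw [CFC.abs_mul_abs, star_eq_conjTranspose, hX.eq]
  have hself : (CFC.abs H + CFC.abs K)ᴴ = CFC.abs H + CFC.abs K :=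
    ((CFC.abs_nonneg H).isSelfAdjoint.add (CFC.abs_nonneg K).isSelfAdjoint).star_eq
  have h : (CFC.abs H + CFC.abs K)ᴴ * (CFC.abs H + CFC.abs K) - (H * H + K * K) =
      CFC.abs H * CFC.abs K + CFC.abs K * CFC.abs H := by
    rw [hself, add_mul, mul_add, mul_add, hsq H hH, hsq K hK]
    abel
  have hprod : 0 ≤ CFC.abs H * CFC.abs K :=
    habs.mul_nonneg (CFC.abs_nonneg H) (CFC.abs_nonneg K)
  rw [h, ← nonneg_iff_posSemidef]
  exact add_nonneg hprod (habs.eq ▸ hprod)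

lemma isHermitian_cartesianRe (A : Matrix n n ℂ) : ((2 : ℂ)⁻¹ • (A + Aᴴ)).IsHermitian := by
  rw [IsHermitian, conjTranspose_smul, conjTranspose_add, conjTranspose_conjTranspose,
    add_comm Aᴴ A]
  simp

lemma isHermitian_cartesianIm (A : Matrix n n ℂ) :
    ((2 * Complex.I)⁻¹ • (A - Aᴴ)).IsHermitian := by
  rw [IsHermitian, conjTranspose_smul, conjTranspose_sub, conjTranspose_conjTranspose,
    ← neg_sub, smul_neg, ← neg_smul]
  congr 1
  simp [Complex.conj_I, mul_comm]

variable {A : Matrix n n ℂ}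

lemma commute_cartesianRe_cartesianIm [Fintype n] (hN : Aᴴ * A = A * Aᴴ) :
    Commute ((2 : ℂ)⁻¹ • (A + Aᴴ)) ((2 * Complex.I)⁻¹ • (A - Aᴴ)) := by
  have hA : Commute A Aᴴ := hN.symm
  exact (((Commute.refl A).sub_right hA).add_left (hA.symm.sub_right (.refl _))).smul_left
    _ |>.smul_right _

lemma conjTranspose_mul_self_eq_cartesian [Fintype n] (hN : Aᴴ * A = A * Aᴴ) :
    Aᴴ * A = ((2 : ℂ)⁻¹ • (A + Aᴴ)) * ((2 : ℂ)⁻¹ • (A + Aᴴ)) +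
      ((2 * Complex.I)⁻¹ • (A - Aᴴ)) * ((2 * Complex.I)⁻¹ • (A - Aᴴ)) := by
  have hI : (2 * Complex.I)⁻¹ * (2 * Complex.I)⁻¹ = -(2⁻¹ * 2⁻¹) := by
    rw [← mul_inv, mul_mul_mul_comm, Complex.I_mul_I, ← mul_inv, mul_neg_one, inv_neg]
  rw [smul_mul_smul_comm, smul_mul_smul_comm, hI, add_mul, mul_add, mul_add, sub_mul, mul_sub,
    mul_sub, ← hN]
  module

end Cartesian

theorem sv_normal_cartesian {n : ℕ} (A : Matrix (Fin n) (Fin n) ℂ)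
    (hN : Aᴴ * A = A * Aᴴ) :
    ∀ j : Fin n,
      (1 / Real.sqrt 2) *
          sv ((2 : ℂ)⁻¹ • (A + Aᴴ) + (2 * Complex.I)⁻¹ • (A - Aᴴ)) j ≤ sv A j ∧
      sv A j ≤ sv (matAbs ((2 : ℂ)⁻¹ • (A + Aᴴ)) +
        matAbs ((2 * Complex.I)⁻¹ • (A - Aᴴ))) j := by
  intro j
  set H := (2 : ℂ)⁻¹ • (A + Aᴴ)
  set K := (2 * Complex.I)⁻¹ • (A - Aᴴ)
  have hH : H.IsHermitian := isHermitian_cartesianRe A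
  have hK : K.IsHermitian := isHermitian_cartesianIm A
  have hAA : Aᴴ * A = H * H + K * K := conjTranspose_mul_self_eq_cartesian hN
  constructor
  · have h := sv_le_sqrt_mul_sv (A := H + K) (B := A) zero_le_two
      (by rw [hAA]; exact_mod_cast posSemidef_two_smul_add_sub_sq hH hK) j
    rwa [one_div, inv_mul_le_iff₀ (by positivity)]
  · have h := sv_le_sqrt_mul_sv (A := A) (B := matAbs H + matAbs K) zero_le_one
      (by rw [hAA, Complex.ofReal_one, one_smul]
          exact posSemidef_matAbs_add_sq_sub hH hK (commute_cartesianRe_cartesianIm hN)) j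
    rwa [Real.sqrt_one, one_mul] at h
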